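/- Let (U(t))_{t∈ℕ} be a sequence of nonnegative reals and suppose there exist constants B > 0 and ε > 0 such that U(t+1)² − U(t)² ≤ B − ε·U(t) for all t. Then limsup_{τ→∞} (1/τ)·Σ_{t=1}^{τ} U(t) ≤ B/ε < ∞. -/

import Mathlib

open Filter Finset

theorem drift_sum_Icc_le {U : ℕ → ℝ} {B ε : ℝ}
    (hdrift : ∀ t, U (t + 1) ^ 2 - U t ^ 2 ≤ B - ε * U t) (τ : ℕ) :
    ε * ∑ t ∈ Icc 1 τ, U t + U (τ + 1) ^ 2 ≤ τ * B + U 1 ^ 2 := by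
  induction τ with
  | zero => simp
  | succ τ ih =>
    rw [sum_Icc_succ_top (by omega), mul_add]
    push_cast
    linarith [hdrift (τ + 1)]

theorem drift_timeAverage_le {U : ℕ → ℝ} {B ε : ℝ} (hε : 0 < ε)
    (hdrift : ∀ t, U (t + 1) ^ 2 - U t ^ 2 ≤ B - ε * U t) {τ : ℕ} (hτ : 1 ≤ τ) :
    (1 / (τ : ℝ)) * ∑ t ∈ Icc 1 τ, U t ≤ B / ε + U 1 ^ 2 / ε * (1 / (τ : ℝ)) := by
  have hτ' : (0 : ℝ) < τ := by exact_mod_cast hτ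
  have hsum : ε * ∑ t ∈ Icc 1 τ, U t ≤ τ * B + U 1 ^ 2 := by
    linarith [drift_sum_Icc_le hdrift τ, sq_nonneg (U (τ + 1))]
  calc (1 / (τ : ℝ)) * ∑ t ∈ Icc 1 τ, U t = (ε * ∑ t ∈ Icc 1 τ, U t) / (ε * τ) := by
        field_simp
    _ ≤ (τ * B + U 1 ^ 2) / (ε * τ) := by gcongr
    _ = B / ε + U 1 ^ 2 / ε * (1 / (τ : ℝ)) := by field_simp

theorem stmt_6_general (U : ℕ → ℝ) (hU : ∀ t, 0 ≤ U t) (B ε : ℝ)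
    (hε : 0 < ε)
    (hdrift : ∀ t, U (t + 1) ^ 2 - U t ^ 2 ≤ B - ε * U t) :
    Filter.limsup (fun τ : ℕ => (1 / (τ : ℝ)) * ∑ t ∈ Finset.Icc 1 τ, U t)
        Filter.atTop ≤ B / ε := by
  have hbound : Tendsto (fun τ : ℕ => B / ε + U 1 ^ 2 / ε * (1 / (τ : ℝ))) atTop
      (nhds (B / ε)) := by
    simpa using (tendsto_one_div_atTop_nhds_zero_nat.const_mul (U 1 ^ 2 / ε)).const_add (B / ε)
  calc limsup (fun τ : ℕ => (1 / (τ : ℝ)) * ∑ t ∈ Icc 1 τ, U t) atTop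
      ≤ limsup (fun τ : ℕ => B / ε + U 1 ^ 2 / ε * (1 / (τ : ℝ))) atTop :=
        limsup_le_limsup
          (eventually_atTop.2 ⟨1, fun τ hτ => drift_timeAverage_le hε hdrift hτ⟩)
          -- `limsup` on `ℝ` is only meaningful for sequences bounded below
          (isCoboundedUnder_le_of_le atTop fun τ =>
            mul_nonneg (by positivity) (sum_nonneg fun t _ => hU t))
          hbound.isBoundedUnder_le
    _ = B / ε := hbound.limsup_eq

/-- Scalar deterministic Lyapunov stability theorem: a drift condition
`U(t+1)² - U(t)² ≤ B - ε U(t)` implies the time-average backlog is at most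
`B / ε`. -/
theorem stmt_6 (U : ℕ → ℝ) (hU : ∀ t, 0 ≤ U t) (B ε : ℝ) (hB : 0 < B)
    (hε : 0 < ε)
    (hdrift : ∀ t, U (t + 1) ^ 2 - U t ^ 2 ≤ B - ε * U t) :
    Filter.limsup (fun τ : ℕ => (1 / (τ : ℝ)) * ∑ t ∈ Finset.Icc 1 τ, U t)
        Filter.atTop ≤ B / ε :=
  stmt_6_general U hU B ε hε hdrift
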